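/- Let J ≥ 1 and let E be an arbitrary subset of X = {0,…,J}^{ℤ₋}. There exists a continuous g-function g on X with g(ξ) = 0 for every exit point ξ of E (so E is invariant for g) if and only if ⋂_{j=0}^{J} (closure(E_e^c))^{*,j} = ∅. -/

import Mathlib

open Set Topology

def shiftX {J : ℕ} (ξ : ℕ → Fin (J+1)) : ℕ → Fin (J+1) := fun n => ξ (n+1)

def consX {J : ℕ} (a : Fin (J+1)) (ξ : ℕ → Fin (J+1)) : ℕ → Fin (J+1) :=
  fun n => match n with
  | 0 => a
  | m+1 => ξ m

def starX {J : ℕ} (j : Fin (J+1)) (ξ : ℕ → Fin (J+1)) : ℕ → Fin (J+1) :=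
  fun n => match n with
  | 0 => ξ 0 + j
  | m+1 => ξ (m+1)

/-- The set of exit points of `E`: points outside `E` whose shift lies in `E`. -/
def exitX {J : ℕ} (E : Set (ℕ → Fin (J+1))) : Set (ℕ → Fin (J+1)) :=
  {ξ | ξ ∉ E ∧ shiftX ξ ∈ E}

/-- A subshift: a nonempty, closed, proper, shift-invariant subset. -/
def IsSubshift {J : ℕ} (K : Set (ℕ → Fin (J+1))) : Prop :=
  K.Nonempty ∧ IsClosed K ∧ K ≠ Set.univ ∧ K = shiftX '' K

/-- The word `(w₁,…,w_m)` occurs in `ξ` if for some `i ≥ 0` the consecutive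
coordinates `(ξ(i+m−1),…,ξ(i))` equal `(w₁,…,w_m)`. -/
def OccursX {J : ℕ} (w : List (Fin (J+1))) (ξ : ℕ → Fin (J+1)) : Prop :=
  ∃ i : ℕ, ∀ k, k < w.length → ξ (i + k) = w.reverse.getD k 0

/-- A subshift of finite type: defined by a finite nonempty set of forbidden words. -/
def IsFiniteType {J : ℕ} (K : Set (ℕ → Fin (J+1))) : Prop :=
  ∃ F : Finset (List (Fin (J+1))), F.Nonempty ∧ K = {ξ | ∀ w ∈ F, ¬ OccursX w ξ}

/-!
If `g` is a continuous g-function vanishing on the exit points of `E`, it vanishes on their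
closure `C`, so no fibre `Θ⁻¹(ι)` can lie inside `C`; since the fibre of `Θ(ξ)` is
`{ξ^{*,j} : j}`, this says the intersection is empty. Conversely, emptiness means every fibre
meets the complement of `C`; a continuous `F ≥ 0` with zero set exactly `C` then has a positive
sum over every fibre, and dividing `F` by that sum gives the required g-function.
-/

theorem IsClosed.exists_continuous_nonneg_eq_zero_iff {X : Type*} [TopologicalSpace X]
    [TopologicalSpace.PseudoMetrizableSpace X] {s : Set X} (hs : IsClosed s) :
    ∃ f : X → ℝ, Continuous f ∧ (∀ x, 0 ≤ f x) ∧ ∀ x, f x = 0 ↔ x ∈ s := by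
  let := TopologicalSpace.pseudoMetrizableSpacePseudoMetric X
  rcases s.eq_empty_or_nonempty with rfl | hne
  · exact ⟨fun _ => 1, continuous_const, fun _ => zero_le_one, fun _ => by simp⟩
  · refine ⟨(Metric.infDist · s), Metric.continuous_infDist_pt s,
      fun _ => Metric.infDist_nonneg, fun x => ?_⟩
    rw [← Metric.mem_closure_iff_infDist_zero hne, hs.closure_eq]

section Shift

variable {J : ℕ}

lemma shiftX_consX (a : Fin (J+1)) (ξ : ℕ → Fin (J+1)) : shiftX (consX a ξ) = ξ := rfl

lemma starX_eq_consX (j : Fin (J+1)) (ξ : ℕ → Fin (J+1)) :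
    starX j ξ = consX (ξ 0 + j) (shiftX ξ) := by
  funext n; cases n <;> rfl

lemma continuous_consX (a : Fin (J+1)) : Continuous (consX (J := J) a) :=
  continuous_pi fun n => by
    cases n with
    | zero => exact continuous_const
    | succ m => exact continuous_apply m

lemma continuous_shiftX : Continuous (shiftX (J := J)) :=
  continuous_pi fun n => continuous_apply (n + 1)

lemma mem_iInter_starX_iff {S : Set (ℕ → Fin (J+1))} {ξ : ℕ → Fin (J+1)} :
    ξ ∈ ⋂ j : Fin (J+1), {η | starX j η ∈ S} ↔ ∀ a, consX a (shiftX ξ) ∈ S := by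
  simp only [mem_iInter, mem_ofPred_eq, starX_eq_consX]
  exact ⟨fun h a => by simpa using h (a - ξ 0), fun h j => h _⟩

lemma iInter_starX_eq_empty_iff {S : Set (ℕ → Fin (J+1))} :
    ⋂ j : Fin (J+1), {η | starX j η ∈ S} = ∅ ↔ ∀ ι, ∃ a, consX a ι ∉ S := by
  simp only [eq_empty_iff_forall_notMem, mem_iInter_starX_iff, not_forall]
  exact ⟨fun h ι => h (consX 0 ι), fun h ξ => h (shiftX ξ)⟩

end Shift

section Normalize

variable {J : ℕ} {F : (ℕ → Fin (J+1)) → ℝ}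

noncomputable def normalizeX (F : (ℕ → Fin (J+1)) → ℝ) (η : ℕ → Fin (J+1)) : ℝ :=
  F η / ∑ b, F (consX b (shiftX η))

lemma sum_consX_pos (hF : ∀ η, 0 ≤ F η) (hpos : ∀ ι, ∃ a, 0 < F (consX a ι))
    (ι : ℕ → Fin (J+1)) : 0 < ∑ b, F (consX b ι) :=
  let ⟨a, ha⟩ := hpos ι
  Finset.sum_pos' (fun _ _ => hF _) ⟨a, Finset.mem_univ a, ha⟩

lemma continuous_normalizeX (hFc : Continuous F) (hF : ∀ η, 0 ≤ F η)
    (hpos : ∀ ι, ∃ a, 0 < F (consX a ι)) : Continuous (normalizeX F) :=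
  hFc.div
    (continuous_finsetSum _ fun b _ => hFc.comp ((continuous_consX b).comp continuous_shiftX))
    fun _ => (sum_consX_pos hF hpos _).ne'

lemma normalizeX_nonneg (hF : ∀ η, 0 ≤ F η) (η : ℕ → Fin (J+1)) : 0 ≤ normalizeX F η :=
  div_nonneg (hF η) (Finset.sum_nonneg fun _ _ => hF _)

lemma sum_normalizeX_consX (hF : ∀ η, 0 ≤ F η) (hpos : ∀ ι, ∃ a, 0 < F (consX a ι))
    (ι : ℕ → Fin (J+1)) : ∑ a, normalizeX F (consX a ι) = 1 := by
  simp only [normalizeX, shiftX_consX, ← Finset.sum_div]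
  exact div_self (sum_consX_pos hF hpos ι).ne'

lemma normalizeX_eq_zero {η : ℕ → Fin (J+1)} (h : F η = 0) : normalizeX F η = 0 := by
  simp [normalizeX, h]

end Normalize

theorem set_has_gFunction_iff_general {J : ℕ} (E : Set (ℕ → Fin (J+1))) :
    (∃ g : (ℕ → Fin (J+1)) → ℝ, Continuous g ∧ (∀ ξ, 0 ≤ g ξ) ∧
        (∀ ξ, ∑ a : Fin (J+1), g (consX a ξ) = 1) ∧
        (∀ ξ ∈ exitX E, g ξ = 0)) ↔
      (⋂ j : Fin (J+1), {ξ : ℕ → Fin (J+1) | starX j ξ ∈ closure (exitX E)}) = ∅ := by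
  rw [iInter_starX_eq_empty_iff]
  constructor
  · rintro ⟨g, hgc, -, hsum, hexit⟩ ι
    have hzero : EqOn g 0 (closure (exitX E)) := EqOn.closure hexit hgc continuous_const
    obtain ⟨a, -, ha⟩ := Finset.exists_ne_zero_of_sum_ne_zero (hsum ι ▸ one_ne_zero)
    exact ⟨a, fun h => ha (hzero h)⟩
  · intro hfibre
    obtain ⟨F, hFc, hF, hFzero⟩ := isClosed_closure.exists_continuous_nonneg_eq_zero_iff
      (s := closure (exitX E))
    have hpos : ∀ ι, ∃ a, 0 < F (consX a ι) := fun ι =>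
      (hfibre ι).imp fun a ha => (hF _).lt_of_ne' (mt (hFzero _).1 ha)
    exact ⟨normalizeX F, continuous_normalizeX hFc hF hpos, normalizeX_nonneg hF,
      sum_normalizeX_consX hF hpos,
      fun ξ hξ => normalizeX_eq_zero ((hFzero ξ).2 (subset_closure hξ))⟩

/-- For an arbitrary `E ⊂ X`, there is a continuous `g`-function vanishing
on the exit points of `E` (so `E` is invariant) iff `⋂_{j=0}^{J} (closure E_e^c)^{*,j} = ∅`. -/
theorem set_has_gFunction_iff {J : ℕ} (hJ : 1 ≤ J) (E : Set (ℕ → Fin (J+1))) :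
    (∃ g : (ℕ → Fin (J+1)) → ℝ, Continuous g ∧ (∀ ξ, 0 ≤ g ξ) ∧
        (∀ ξ, ∑ a : Fin (J+1), g (consX a ξ) = 1) ∧
        (∀ ξ ∈ exitX E, g ξ = 0)) ↔
      (⋂ j : Fin (J+1), {ξ : ℕ → Fin (J+1) | starX j ξ ∈ closure (exitX E)}) = ∅ :=
  set_has_gFunction_iff_general E
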